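/- Let d ≥ 1 and p_1, …, p_d ∈ (0,1), set μ = p_1 + ⋯ + p_d and q = (p_1/μ, …, p_d/μ). If μ > 1 and λ(q) ≤ μ − 1, then the martingale W_n = X_n/μ^n of anisotropic oriented percolation on ℤ^d satisfies sup_n 𝔼[W_n²] < ∞. -/

import Mathlib

open MeasureTheory ProbabilityTheory

/-- The `i`-th standard basis vector of `ℤ^d`. -/
def stdBasis (d : ℕ) (i : Fin d) : Fin d → ℤ := fun j => if j = i then 1 else 0

/-- A percolation configuration: each oriented edge `⟨x, x + e i⟩`, encoded as the pair
`(x, i)`, is either open (`true`) or closed (`false`). -/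
abbrev Config (d : ℕ) := ((Fin d → ℤ) × Fin d) → Bool

/-- The position after `j` steps of the oriented path starting at the origin whose
sequence of step directions is `γ`. -/
def pathPos (d : ℕ) {n : ℕ} (γ : Fin n → Fin d) (j : ℕ) : Fin d → ℤ :=
  ∑ t ∈ Finset.univ.filter (fun t : Fin n => (t : ℕ) < j), stdBasis d (γ t)

/-- The oriented path with step directions `γ` starting at the origin is open in the
configuration `ω`: each of its oriented edges is open. -/
def pathOpen (d : ℕ) {n : ℕ} (ω : Config d) (γ : Fin n → Fin d) : Prop :=
  ∀ j : Fin n, ω (pathPos d γ (j : ℕ), γ j) = true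

/-- The open cluster of the origin: all vertices reachable from `0` by an open oriented path. -/
def cluster (d : ℕ) (ω : Config d) : Set (Fin d → ℤ) :=
  {x | ∃ (n : ℕ) (γ : Fin n → Fin d), pathOpen d ω γ ∧ pathPos d γ n = x}

/-- The position at time `n` of the `i`-th walk, given the family of steps `ξ`:
`S^i_n = ξ^i_1 + ⋯ + ξ^i_n`. -/
def walkSum {Ω : Type*} {k : ℕ} (ξ : Fin 2 × ℕ → Ω → (Fin k → ℤ)) (i : Fin 2)
    (n : ℕ) (ω : Ω) : Fin k → ℤ :=
  ∑ t ∈ Finset.range n, ξ (i, t) ω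

/-- The event that the two walks are at the same place at time `n`. -/
def meetEvent {Ω : Type*} {k : ℕ} (ξ : Fin 2 × ℕ → Ω → (Fin k → ℤ)) (n : ℕ) : Set Ω :=
  {ω | walkSum ξ 0 n ω = walkSum ξ 1 n ω}

/-- The event `{τ = n}` where `τ = inf {n ≥ 1 : S¹_n = S²_n}` is the first meeting
time of the two walks. -/
def tauEvent {Ω : Type*} {k : ℕ} (ξ : Fin 2 × ℕ → Ω → (Fin k → ℤ)) (n : ℕ) : Set Ω :=
  {ω | walkSum ξ 0 n ω = walkSum ξ 1 n ω ∧
    ∀ m : ℕ, 0 < m → m < n → walkSum ξ 0 m ω ≠ walkSum ξ 1 m ω}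

/-- `Xcount d n ω` is the number of open oriented paths of length `n` starting at the
origin in the configuration `ω`. -/
noncomputable def Xcount (d n : ℕ) (ω : Config d) : ℕ :=
  Nat.card {γ : Fin n → Fin d // pathOpen d ω γ}

/-!
Expanding `X_n²` over pairs of paths, `𝔼[W_n²] = D_n`, the sum over pairs `(γ, γ')` of length `n`
of `∏ q(γ_j) q(γ'_j)` with an extra factor `1 / p_i` for every edge (in direction `i`) that the
two paths share. Cutting a pair at its first meeting time gives a renewal equation
`D_n = ∑_{1 ≤ m ≤ n} c_m D_{n-m} + t_n`, where `t_n ≤ 1` is the weight of pairs that have not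
met again, `c_m = f_m` (the first-meeting probability of the two `q`-walks) for `m ≥ 2` since
pairs meeting first at time `m ≥ 2` share no edge, and `c_1 = ∑ q_i² / p_i = 1/μ`. The renewal
equation of the walks themselves gives `∑ f_m = 1 - 1/(1 + λ(q)) ≤ 1 - 1/μ`, so
`∑ c_m ≤ 1 - f_1` and `D_n ≤ 1/f_1 = (∑ q_i²)⁻¹`.
-/

open Finset Filter Topology
open scoped ENNReal Classical

variable {d : ℕ}

section RenewalSequences

variable {a b : ℕ → ℝ}

lemma sum_Icc_mul_sum_range_le (ha : ∀ n, 0 ≤ a n) (hb : ∀ n, 0 ≤ b n)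
    (hrec : ∀ n, 1 ≤ n → a n = ∑ m ∈ Icc 1 n, b m * a (n - m)) (M K : ℕ) :
    (∑ m ∈ Icc 1 M, b m) * ∑ k ∈ range (K + 1), a k ≤ ∑ n ∈ Icc 1 (M + K), a n := by
  have hnonneg : ∀ m k, 0 ≤ b m * a k := fun m k => mul_nonneg (hb m) (ha k)
  calc (∑ m ∈ Icc 1 M, b m) * ∑ k ∈ range (K + 1), a k
      = ∑ m ∈ Icc 1 M, ∑ k ∈ range (K + 1), b m * a k := sum_mul_sum _ _ _ _
    _ ≤ ∑ m ∈ Icc 1 M, ∑ k ∈ range (M + K + 1 - m), b m * a k :=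
        sum_le_sum fun m hm => sum_le_sum_of_subset_of_nonneg
          (range_subset_range.2 (by simp at hm; omega)) fun _ _ _ => hnonneg _ _
    _ ≤ ∑ m ∈ Icc 1 (M + K), ∑ k ∈ range (M + K + 1 - m), b m * a k :=
        sum_le_sum_of_subset_of_nonneg (Icc_subset_Icc_right (by omega))
          fun _ _ _ => sum_nonneg fun _ _ => hnonneg _ _
    _ = ∑ m ∈ Icc 1 (M + K), ∑ n ∈ Ico m (M + K + 1), b m * a (n - m) := by
        refine sum_congr rfl fun m _ => ?_
        rw [sum_Ico_eq_sum_range]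
        simp
    _ = ∑ n ∈ Icc 1 (M + K), ∑ m ∈ Icc 1 n, b m * a (n - m) :=
        sum_comm' fun m n => by simp only [mem_Icc, mem_Ico]; omega
    _ = ∑ n ∈ Icc 1 (M + K), a n := sum_congr rfl fun n hn => (hrec n (mem_Icc.1 hn).1).symm

/-- `a` is the renewal sequence of the defective distribution `b`; in the limit the bound is
the identity `∑ₘ bₘ = 1 - 1 / ∑ₙ aₙ`. -/
lemma sum_Icc_mul_le_sub_one_of_renewal (ha0 : a 0 = 1) (ha : ∀ n, 0 ≤ a n)
    (hb : ∀ n, 0 ≤ b n) (hrec : ∀ n, 1 ≤ n → a n = ∑ m ∈ Icc 1 n, b m * a (n - m)) {G : ℝ}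
    (hG : ∀ N, ∑ n ∈ range N, a n ≤ G) (M : ℕ) : (∑ m ∈ Icc 1 M, b m) * G ≤ G - 1 := by
  have hsum_Icc : ∀ N, ∑ n ∈ Icc 1 N, a n = ∑ n ∈ range (N + 1), a n - 1 := fun N => by
    rw [← sum_range_add_sum_Ico a (by omega : 1 ≤ N + 1), Finset.Ico_add_one_right_eq_Icc]
    simp [ha0]
  have hbdd : BddAbove (Set.range fun N => ∑ n ∈ range N, a n) := ⟨G, Set.forall_mem_range.2 hG⟩
  set S := ⨆ N, ∑ n ∈ range N, a n
  have hA : Tendsto (fun N => ∑ n ∈ range N, a n) atTop (𝓝 S) :=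
    tendsto_atTop_ciSup (fun N N' h => sum_le_sum_of_subset_of_nonneg (range_subset_range.2 h)
      fun n _ _ => ha n) hbdd
  have hBS : (∑ m ∈ Icc 1 M, b m) * S ≤ S - 1 := by
    refine le_of_tendsto_of_tendsto' ((hA.comp (tendsto_add_atTop_nat 1)).const_mul _)
      ((hA.comp (tendsto_add_atTop_nat (M + 1))).sub_const 1) fun K => ?_
    show _ * ∑ n ∈ range (K + 1), a n ≤ ∑ n ∈ range (K + (M + 1)), a n - 1
    rw [show K + (M + 1) = M + K + 1 by ring, ← hsum_Icc]
    exact sum_Icc_mul_sum_range_le ha hb hrec M K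
  have hSG : S ≤ G := ciSup_le hG
  have hS1 : 1 ≤ S := by simpa [ha0] using le_ciSup hbdd 1
  have hB0 : 0 ≤ ∑ m ∈ Icc 1 M, b m := sum_nonneg fun m _ => hb m
  nlinarith

lemma le_inv_of_renewal {c t D : ℕ → ℝ} {ε : ℝ} (hε : 0 < ε) (hc : ∀ m, 0 ≤ c m)
    (hc_sum : ∀ n, ∑ m ∈ Icc 1 n, c m ≤ 1 - ε) (ht : ∀ n, t n ≤ 1)
    (hD : ∀ n, D n = ∑ m ∈ Icc 1 n, c m * D (n - m) + t n) (n : ℕ) : D n ≤ ε⁻¹ := by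
  induction n using Nat.strong_induction_on with
  | _ n ih =>
    calc D n = ∑ m ∈ Icc 1 n, c m * D (n - m) + t n := hD n
      _ ≤ ∑ m ∈ Icc 1 n, c m * ε⁻¹ + 1 := by
          gcongr with m hm
          · exact hc m
          · exact ih _ (by simp at hm; omega)
          · exact ht n
      _ ≤ (1 - ε) * ε⁻¹ + 1 := by
          rw [← sum_mul]; gcongr; exact hc_sum n
      _ = ε⁻¹ := by field_simp; ring

end RenewalSequences

lemma stdBasis_injective : Function.Injective (stdBasis d) := by
  intro i i' h
  simpa [stdBasis] using congrFun h i

@[simp] lemma pathPos_zero {n : ℕ} (γ : Fin n → Fin d) : pathPos d γ 0 = 0 := by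
  simp [pathPos]

lemma pathPos_of_le {n j : ℕ} (γ : Fin n → Fin d) (hj : n ≤ j) :
    pathPos d γ j = ∑ t, stdBasis d (γ t) := by
  rw [pathPos, filter_true_of_mem fun t _ => t.isLt.trans_le hj]

lemma pathPos_succ {n : ℕ} (γ : Fin n → Fin d) (j : Fin n) :
    pathPos d γ (j + 1) = pathPos d γ j + stdBasis d (γ j) := by
  have : univ.filter (fun t : Fin n => (t : ℕ) < j + 1)
      = insert j (univ.filter fun t : Fin n => (t : ℕ) < j) := by
    ext t; simp only [mem_filter, mem_univ, true_and, mem_insert, Fin.ext_iff]; omega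
  rw [pathPos, pathPos, this, sum_insert (by simp), add_comm]

lemma sum_pathPos {n j : ℕ} (γ : Fin n → Fin d) (hj : j ≤ n) : ∑ i, pathPos d γ j i = j := by
  have hcard : #(univ.filter fun t : Fin n => (t : ℕ) < j) = j := by
    rw [Fin.card_filter_val_lt]; omega
  simp only [pathPos, Finset.sum_apply, stdBasis]
  rw [sum_comm]
  simp [hcard]

lemma pathPos_append_of_le {m k j : ℕ} (γ : Fin m → Fin d) (δ : Fin k → Fin d) (hj : j ≤ m) :
    pathPos d (Fin.append γ δ) j = pathPos d γ j := by
  simp only [pathPos, sum_filter, Fin.sum_univ_add, Fin.append_left, Fin.append_right,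
    Fin.val_castAdd, Fin.val_natAdd]
  rw [add_eq_left]
  exact sum_eq_zero fun i _ => if_neg (by omega)

lemma pathPos_append_add {m k : ℕ} (γ : Fin m → Fin d) (δ : Fin k → Fin d) (j : ℕ) :
    pathPos d (Fin.append γ δ) (m + j) = pathPos d γ m + pathPos d δ j := by
  simp only [pathPos, sum_filter, Fin.sum_univ_add, Fin.append_left, Fin.append_right,
    Fin.val_castAdd, Fin.val_natAdd, add_lt_add_iff_left]
  congr 1
  exact sum_congr rfl fun i _ => by simp [show (i : ℕ) < m + j by omega]

abbrev PathPair (d n : ℕ) := (Fin n → Fin d) × (Fin n → Fin d)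

namespace PathPair

variable {m k n : ℕ}

def Meets (π : PathPair d n) (j : ℕ) : Prop := pathPos d π.1 j = pathPos d π.2 j

def FirstMeetsAt (π : PathPair d n) (m : ℕ) : Prop :=
  π.Meets m ∧ ∀ l, 0 < l → l < m → ¬ π.Meets l

def NeverMeets (π : PathPair d n) : Prop := ∀ m, 0 < m → m ≤ n → ¬ π.Meets m

def SharesEdge (π : PathPair d n) (j : Fin n) : Prop := π.Meets j ∧ π.1 j = π.2 j

def append (σ : PathPair d m) (τ : PathPair d k) : PathPair d (m + k) :=
  (Fin.append σ.1 τ.1, Fin.append σ.2 τ.2)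

lemma FirstMeetsAt.meets {π : PathPair d n} {m : ℕ} (h : π.FirstMeetsAt m) : π.Meets m := h.1

lemma meets_zero (π : PathPair d n) : π.Meets 0 := by simp [Meets]

lemma SharesEdge.meets_succ {π : PathPair d n} {j : Fin n} (h : π.SharesEdge j) :
    π.Meets (j + 1) := by
  rw [Meets, pathPos_succ, pathPos_succ, h.1, h.2]

lemma sum_append {M : Type*} [AddCommMonoid M] (f : PathPair d (m + k) → M) :
    ∑ π, f π = ∑ σ : PathPair d m, ∑ τ : PathPair d k, f (σ.append τ) := by
  rw [← Fintype.sum_prod_type', ← (Equiv.prodProdProdComm _ _ _ _).sum_comp]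
  exact (Fintype.sum_equiv ((Fin.appendEquiv m k).prodCongr (Fin.appendEquiv m k)) _ _
    fun _ => rfl).symm

lemma append_meets_of_le (σ : PathPair d m) (τ : PathPair d k) {j : ℕ} (hj : j ≤ m) :
    (σ.append τ).Meets j ↔ σ.Meets j := by
  simp only [Meets, append, pathPos_append_of_le _ _ hj]

lemma append_meets_add {σ : PathPair d m} (hσ : σ.Meets m) (τ : PathPair d k) (j : ℕ) :
    (σ.append τ).Meets (m + j) ↔ τ.Meets j := by
  rw [Meets] at hσ
  simp only [Meets, append, pathPos_append_add, hσ, add_right_inj]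

lemma append_firstMeetsAt (σ : PathPair d m) (τ : PathPair d k) :
    (σ.append τ).FirstMeetsAt m ↔ σ.FirstMeetsAt m := by
  simp +contextual only [FirstMeetsAt, append_meets_of_le σ τ le_rfl,
    fun l (hl : l < m) => append_meets_of_le σ τ hl.le]

lemma append_sharesEdge_castAdd (σ : PathPair d m) (τ : PathPair d k) (j : Fin m) :
    (σ.append τ).SharesEdge (Fin.castAdd k j) ↔ σ.SharesEdge j := by
  rw [SharesEdge, SharesEdge, Fin.val_castAdd, append_meets_of_le σ τ j.isLt.le]
  simp [append]

lemma append_sharesEdge_natAdd {σ : PathPair d m} (hσ : σ.Meets m) (τ : PathPair d k)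
    (j : Fin k) : (σ.append τ).SharesEdge (Fin.natAdd m j) ↔ τ.SharesEdge j := by
  rw [SharesEdge, SharesEdge, Fin.val_natAdd, append_meets_add hσ]
  simp [append]

lemma sum_eq_sum_firstMeetsAt_add {M : Type*} [AddCommMonoid M] (f : PathPair d n → M) :
    ∑ π, f π = ∑ m ∈ Icc 1 n, ∑ π, (if π.FirstMeetsAt m then f π else 0)
      + ∑ π, if π.NeverMeets then f π else 0 := by
  rw [sum_comm, ← sum_add_distrib]
  refine sum_congr rfl fun π _ => ?_
  by_cases hnever : π.NeverMeets
  · rw [if_pos hnever, sum_eq_zero fun m hm => if_neg fun h =>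
      hnever m (mem_Icc.1 hm).1 (mem_Icc.1 hm).2 h.meets, zero_add]
  have hex : ∃ m, 0 < m ∧ m ≤ n ∧ π.Meets m := by
    simpa [NeverMeets] using hnever
  have hfirst : π.FirstMeetsAt (Nat.find hex) :=
    ⟨(Nat.find_spec hex).2.2, fun l hl hlt h => Nat.find_min hex hlt
      ⟨hl, hlt.le.trans (Nat.find_spec hex).2.1, h⟩⟩
  have hunique : ∀ m, 0 < m → π.FirstMeetsAt m → m = Nat.find hex := fun m hm h =>
    (lt_trichotomy m _).resolve_left (fun hlt => hfirst.2 m hm hlt h.meets) |>.resolve_right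
      fun hgt => h.2 _ (Nat.find_spec hex).1 hgt hfirst.meets
  rw [if_neg hnever, add_zero, sum_eq_single_of_mem (Nat.find hex)
    (mem_Icc.2 ⟨(Nat.find_spec hex).1, (Nat.find_spec hex).2.1⟩), if_pos hfirst]
  exact fun m hm hne => if_neg fun h => hne (hunique m (mem_Icc.1 hm).1 h)

lemma firstMeetsAt_one_iff (π : PathPair d 1) : π.FirstMeetsAt 1 ↔ π.1 0 = π.2 0 := by
  have hpos : ∀ γ : Fin 1 → Fin d, pathPos d γ 1 = stdBasis d (γ 0) := fun γ => by
    simpa using pathPos_succ γ 0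
  simp only [FirstMeetsAt, Meets, hpos, stdBasis_injective.eq_iff]
  exact and_iff_left fun l hl hl1 => absurd hl1 (by omega)

lemma sharesEdge_zero_iff (π : PathPair d 1) : π.SharesEdge 0 ↔ π.1 0 = π.2 0 := by
  simp [SharesEdge, Meets]

lemma sum_firstMeetsAt_one {M : Type*} [AddCommMonoid M] (f : Fin d → Fin d → M) :
    ∑ π : PathPair d 1, (if π.FirstMeetsAt 1 then f (π.1 0) (π.2 0) else 0) = ∑ i, f i i := by
  simp only [firstMeetsAt_one_iff, Fintype.sum_prod_type]
  rw [← (Equiv.funUnique (Fin 1) (Fin d)).symm.sum_comp]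
  refine sum_congr rfl fun i _ => ?_
  rw [← (Equiv.funUnique (Fin 1) (Fin d)).symm.sum_comp]
  simp

lemma FirstMeetsAt.not_sharesEdge {n m : ℕ} {π : PathPair d n} (h : π.FirstMeetsAt m)
    (hm : 2 ≤ m) (j : Fin n) (hj : (j : ℕ) < m) : ¬ π.SharesEdge j := by
  intro hs
  rcases Nat.eq_zero_or_pos j with h0 | hpos
  · exact h.2 1 one_pos (by omega) (by simpa [h0] using hs.meets_succ)
  · exact h.2 j hpos hj hs.1

section Renewal

variable {R : Type*} [Semiring R] (F : ∀ n, PathPair d n → R)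
  (hF : ∀ m k (σ : PathPair d m) (τ : PathPair d k), σ.Meets m →
    F (m + k) (σ.append τ) = F m σ * F k τ)
include hF

lemma sum_firstMeetsAt_append :
    ∑ π : PathPair d (m + k), (if π.FirstMeetsAt m then F (m + k) π else 0)
      = (∑ σ : PathPair d m, if σ.FirstMeetsAt m then F m σ else 0) * ∑ τ, F k τ := by
  rw [sum_append, sum_mul]
  refine sum_congr rfl fun σ _ => ?_
  simp only [append_firstMeetsAt]
  split_ifs with hσ
  · rw [mul_sum]
    exact sum_congr rfl fun τ _ => hF m k σ τ hσ.meets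
  · rw [sum_const_zero, zero_mul]

theorem sum_eq_sum_firstMeetsAt_mul_add (n : ℕ) :
    ∑ π, F n π = ∑ m ∈ Icc 1 n,
        (∑ σ : PathPair d m, if σ.FirstMeetsAt m then F m σ else 0) * ∑ τ, F (n - m) τ
      + ∑ π, if π.NeverMeets then F n π else 0 := by
  rw [sum_eq_sum_firstMeetsAt_add]
  congr 1
  refine sum_congr rfl fun m hm => ?_
  obtain ⟨k, rfl⟩ := Nat.exists_eq_add_of_le (mem_Icc.1 hm).2
  rw [Nat.add_sub_cancel_left, sum_firstMeetsAt_append F hF]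

end Renewal

end PathPair

section Weights

variable {m k n : ℕ} (q r : Fin d → ℝ)

def pairWeight (π : PathPair d n) : ℝ := ∏ j, q (π.1 j) * q (π.2 j)

noncomputable def overlapWeight (π : PathPair d n) : ℝ :=
  ∏ j, q (π.1 j) * q (π.2 j) * if π.SharesEdge j then r (π.1 j) else 1

lemma pairWeight_append (σ : PathPair d m) (τ : PathPair d k) :
    pairWeight q (σ.append τ) = pairWeight q σ * pairWeight q τ := by
  simp [pairWeight, PathPair.append, Fin.prod_univ_add]

lemma overlapWeight_append {σ : PathPair d m} (hσ : σ.Meets m) (τ : PathPair d k) :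
    overlapWeight q r (σ.append τ) = overlapWeight q r σ * overlapWeight q r τ := by
  rw [overlapWeight, Fin.prod_univ_add]
  simp only [PathPair.append_sharesEdge_castAdd, PathPair.append_sharesEdge_natAdd hσ]
  simp [overlapWeight, PathPair.append]

lemma overlapWeight_eq_pairWeight {π : PathPair d n} (h : ∀ j, ¬ π.SharesEdge j) :
    overlapWeight q r π = pairWeight q π := by
  simp [overlapWeight, pairWeight, h]

lemma sum_pairWeight : ∑ π : PathPair d n, pairWeight q π = ((∑ i, q i) ^ n) ^ 2 := by
  simp only [pairWeight, prod_mul_distrib, Fintype.sum_prod_type, ← mul_sum, ← sum_mul,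
    Fintype.sum_pow, sq]

variable {q r}

lemma pairWeight_nonneg (hq : ∀ i, 0 ≤ q i) (π : PathPair d n) : 0 ≤ pairWeight q π :=
  prod_nonneg fun _ _ => mul_nonneg (hq _) (hq _)

lemma overlapWeight_nonneg (hq : ∀ i, 0 ≤ q i) (hr : ∀ i, 0 ≤ r i) (π : PathPair d n) :
    0 ≤ overlapWeight q r π :=
  prod_nonneg fun _ _ => mul_nonneg (mul_nonneg (hq _) (hq _)) (by split_ifs <;> simp [hr])

end Weights

section Sequences

variable (q r : Fin d → ℝ)

noncomputable def meetWeight (n : ℕ) : ℝ :=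
  ∑ π : PathPair d n, if π.Meets n then pairWeight q π else 0

noncomputable def firstMeetWeight (n : ℕ) : ℝ :=
  ∑ π : PathPair d n, if π.FirstMeetsAt n then pairWeight q π else 0

noncomputable def overlapSum (n : ℕ) : ℝ := ∑ π : PathPair d n, overlapWeight q r π

lemma meetWeight_zero : meetWeight q 0 = 1 := by
  simp [meetWeight, pairWeight, PathPair.meets_zero]

lemma meetWeight_eq_sum_firstMeetWeight_mul {n : ℕ} (hn : 1 ≤ n) :
    meetWeight q n = ∑ m ∈ Icc 1 n, firstMeetWeight q m * meetWeight q (n - m) := by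
  rw [meetWeight, PathPair.sum_eq_sum_firstMeetsAt_mul_add
    (fun n (π : PathPair d n) => if π.Meets n then pairWeight q π else 0)]
  · have hnever : ∀ π : PathPair d n, π.NeverMeets → ¬ π.Meets n := fun π h => h n hn le_rfl
    simp +contextual only [hnever, if_false, ite_self, sum_const_zero, add_zero]
    refine sum_congr rfl fun m _ => congrArg (· * _) (sum_congr rfl fun σ _ => ?_)
    by_cases h : σ.FirstMeetsAt m
    · simp [h, h.meets]
    · simp [h]
  · intro m k σ τ hσ
    simp only [PathPair.append_meets_add hσ, pairWeight_append, hσ, if_true]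
    split_ifs <;> simp

lemma overlapSum_div_const (c : ℝ) (n : ℕ) :
    overlapSum (fun i => q i / c) r n = overlapSum q r n / (c ^ n) ^ 2 := by
  simp only [overlapSum, overlapWeight, sum_div]
  refine sum_congr rfl fun π _ => ?_
  rw [show (c ^ n) ^ 2 = ∏ _j : Fin n, c ^ 2 by
    rw [prod_const, card_univ, Fintype.card_fin, ← pow_mul, ← pow_mul, mul_comm],
    ← prod_div_distrib]
  exact prod_congr rfl fun j _ => by ring

variable {q r}

lemma meetWeight_nonneg (hq : ∀ i, 0 ≤ q i) (n : ℕ) : 0 ≤ meetWeight q n :=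
  sum_nonneg fun π _ => by split_ifs <;> simp [pairWeight_nonneg hq]

lemma firstMeetWeight_nonneg (hq : ∀ i, 0 ≤ q i) (n : ℕ) : 0 ≤ firstMeetWeight q n :=
  sum_nonneg fun π _ => by split_ifs <;> simp [pairWeight_nonneg hq]

lemma firstMeetWeight_one : firstMeetWeight q 1 = ∑ i, q i ^ 2 := by
  simpa [firstMeetWeight, pairWeight, sq] using PathPair.sum_firstMeetsAt_one fun i j => q i * q j

lemma sum_firstMeetsAt_one_overlapWeight :
    ∑ σ : PathPair d 1, (if σ.FirstMeetsAt 1 then overlapWeight q r σ else 0)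
      = ∑ i, q i ^ 2 * r i := by
  simpa [sq, overlapWeight, PathPair.sharesEdge_zero_iff] using
    PathPair.sum_firstMeetsAt_one fun i j => q i * q j * if i = j then r i else 1

lemma sum_firstMeetsAt_overlapWeight_of_two_le {m : ℕ} (hm : 2 ≤ m) :
    ∑ σ : PathPair d m, (if σ.FirstMeetsAt m then overlapWeight q r σ else 0)
      = firstMeetWeight q m := by
  refine sum_congr rfl fun σ _ => ?_
  split_ifs with h
  · exact overlapWeight_eq_pairWeight q r fun j => h.not_sharesEdge hm j j.isLt
  · rfl

lemma sum_neverMeets_overlapWeight_le_one (hq0 : ∀ i, 0 ≤ q i) (hq : ∑ i, q i = 1) (n : ℕ) :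
    ∑ π : PathPair d n, (if π.NeverMeets then overlapWeight q r π else 0) ≤ 1 := by
  calc ∑ π : PathPair d n, (if π.NeverMeets then overlapWeight q r π else 0)
      = ∑ π : PathPair d n, if π.NeverMeets then pairWeight q π else 0 := by
        refine sum_congr rfl fun π _ => ?_
        split_ifs with h
        · exact overlapWeight_eq_pairWeight q r fun j hs => h (j + 1) j.succ_pos j.isLt
            hs.meets_succ
        · rfl
    _ ≤ ∑ π : PathPair d n, pairWeight q π :=
        sum_le_sum fun π _ => by split_ifs <;> simp [pairWeight_nonneg hq0]
    _ = 1 := by rw [sum_pairWeight, hq, one_pow, one_pow]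

theorem overlapSum_le_inv (hq0 : ∀ i, 0 ≤ q i) (hq : ∑ i, q i = 1) (hr : ∀ i, 0 ≤ r i)
    {G : ℝ} (hG : ∀ N, ∑ n ∈ range N, meetWeight q n ≤ G) (hqr : (∑ i, q i ^ 2 * r i) * G ≤ 1)
    (n : ℕ) : overlapSum q r n ≤ (∑ i, q i ^ 2)⁻¹ := by
  set c : ℕ → ℝ := fun m =>
    ∑ σ : PathPair d m, if σ.FirstMeetsAt m then overlapWeight q r σ else 0
  have hc : ∀ m, 0 ≤ c m := fun m =>
    sum_nonneg fun σ _ => by split_ifs <;> simp [overlapWeight_nonneg hq0 hr]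
  have hG1 : 1 ≤ G := by simpa [meetWeight_zero] using hG 1
  have hB (N : ℕ) : (∑ m ∈ Icc 1 N, firstMeetWeight q m) * G ≤ G - 1 :=
    sum_Icc_mul_le_sub_one_of_renewal (meetWeight_zero q) (meetWeight_nonneg hq0)
      (firstMeetWeight_nonneg hq0) (fun n hn => meetWeight_eq_sum_firstMeetWeight_mul q hn) hG N
  have hc_eq (N : ℕ) : ∑ m ∈ Icc 1 (N + 1), c m
      = ∑ i, q i ^ 2 * r i - ∑ i, q i ^ 2 + ∑ m ∈ Icc 1 (N + 1), firstMeetWeight q m := by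
    rw [Icc_eq_cons_Ioc (by omega), sum_cons, sum_cons, firstMeetWeight_one,
      sum_congr rfl fun m hm => sum_firstMeetsAt_overlapWeight_of_two_le (r := r)
        (by simp at hm; omega)]
    simp only [c, sum_firstMeetsAt_one_overlapWeight]
    ring
  refine le_inv_of_renewal (c := c) ?_ hc (fun N => ?_)
    (sum_neverMeets_overlapWeight_le_one hq0 hq)
    (PathPair.sum_eq_sum_firstMeetsAt_mul_add (fun _ => overlapWeight q r)
      (fun _ _ _ τ hσ => overlapWeight_append q r hσ τ)) n
  · obtain ⟨i, -, hi⟩ := exists_ne_zero_of_sum_ne_zero (hq.symm ▸ one_ne_zero : ∑ i, q i ≠ 0)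
    exact sum_pos' (fun i _ => sq_nonneg _) ⟨i, mem_univ _, by positivity⟩
  · calc ∑ m ∈ Icc 1 N, c m ≤ ∑ m ∈ Icc 1 (N + 1), c m :=
          sum_le_sum_of_subset_of_nonneg (Icc_subset_Icc_right (by omega)) fun m _ _ => hc m
      _ ≤ 1 - ∑ i, q i ^ 2 := by
          rw [hc_eq]
          have := hB (N + 1)
          nlinarith

end Sequences

section Percolation

variable {n : ℕ} {p : Fin d → ℝ} {P : Measure (Config d)}

def pathEdge (γ : Fin n → Fin d) (j : Fin n) : (Fin d → ℤ) × Fin d := (pathPos d γ j, γ j)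

noncomputable def pathEdges (γ : Fin n → Fin d) : Finset ((Fin d → ℤ) × Fin d) :=
  univ.image (pathEdge γ)

lemma val_eq_of_pathEdge_eq {γ γ' : Fin n → Fin d} {j j' : Fin n}
    (h : pathEdge γ j = pathEdge γ' j') : (j : ℕ) = j' := by
  have := congrArg (fun e => ∑ i, e.1 i) h
  simpa [pathEdge, sum_pathPos _ j.isLt.le, sum_pathPos _ j'.isLt.le] using this

lemma pathEdge_mem_pathEdges_iff {π : PathPair d n} {j : Fin n} :
    pathEdge π.2 j ∈ pathEdges π.1 ↔ π.SharesEdge j := by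
  simp only [pathEdges, mem_image, mem_univ, true_and, PathPair.SharesEdge, PathPair.Meets]
  constructor
  · rintro ⟨j', h⟩
    obtain rfl : j' = j := Fin.ext (val_eq_of_pathEdge_eq h)
    simpa [pathEdge] using h
  · rintro ⟨hpos, hdir⟩
    exact ⟨j, by simp [pathEdge, hpos, hdir]⟩

lemma prod_pathEdges_union {M : Type*} [CommMonoid M] (f : (Fin d → ℤ) × Fin d → M)
    (π : PathPair d n) :
    ∏ e ∈ pathEdges π.1 ∪ pathEdges π.2, f e
      = ∏ j, f (pathEdge π.1 j) * if π.SharesEdge j then 1 else f (pathEdge π.2 j) := by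
  have hinj : ∀ γ : Fin n → Fin d, Set.InjOn (pathEdge γ) Set.univ :=
    fun γ j _ j' _ h => Fin.ext (val_eq_of_pathEdge_eq h)
  have hsdiff : pathEdges π.2 \ pathEdges π.1
      = (univ.filter fun j => ¬ π.SharesEdge j).image (pathEdge π.2) := by
    ext e
    simp only [Finset.mem_sdiff, mem_image, mem_filter, mem_univ, true_and]
    constructor
    · rintro ⟨he, hnot⟩
      obtain ⟨j, -, rfl⟩ := mem_image.1 he
      exact ⟨j, fun h => hnot (pathEdge_mem_pathEdges_iff.2 h), rfl⟩
    · rintro ⟨j, hj, rfl⟩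
      exact ⟨mem_image_of_mem _ (mem_univ j), fun h => hj (pathEdge_mem_pathEdges_iff.1 h)⟩
  rw [← union_sdiff_self_eq_union, prod_union disjoint_sdiff, hsdiff,
    prod_image fun j _ j' _ h => hinj π.2 trivial trivial h, pathEdges,
    prod_image fun j _ j' _ h => hinj π.1 trivial trivial h, prod_filter, ← prod_mul_distrib]
  simp only [ite_not]

lemma prod_pathEdges_union_eq_overlapWeight {p : Fin d → ℝ} (hp : ∀ i, p i ≠ 0)
    (π : PathPair d n) :
    ∏ e ∈ pathEdges π.1 ∪ pathEdges π.2, p e.2 = overlapWeight p (fun i => (p i)⁻¹) π := by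
  rw [prod_pathEdges_union, overlapWeight]
  refine prod_congr rfl fun j _ => ?_
  split_ifs with h
  · rw [pathEdge, ← h.2]
    field_simp [hp]
  · simp [pathEdge]

lemma pathOpen_iff_forall_mem_pathEdges (ω : Config d) (γ : Fin n → Fin d) :
    pathOpen d ω γ ↔ ∀ e ∈ pathEdges γ, ω e = true := by
  simp [pathOpen, pathEdges, pathEdge]

lemma measurableSet_pathOpen (γ : Fin n → Fin d) :
    MeasurableSet {ω : Config d | pathOpen d ω γ} := by
  simp only [pathOpen, Set.ofPred_forall]
  exact MeasurableSet.iInter fun j => measurableSet_eq_fun (measurable_pi_apply _) measurable_const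

lemma measure_pathOpen_inter (hindep : iIndepFun (fun e (ω : Config d) => ω e) P)
    (hmarg : ∀ e : (Fin d → ℤ) × Fin d, P {ω | ω e = true} = ENNReal.ofReal (p e.2))
    (π : PathPair d n) :
    P ({ω | pathOpen d ω π.1} ∩ {ω | pathOpen d ω π.2})
      = ∏ e ∈ pathEdges π.1 ∪ pathEdges π.2, ENNReal.ofReal (p e.2) := by
  have hset : {ω | pathOpen d ω π.1} ∩ {ω | pathOpen d ω π.2}
      = ⋂ e ∈ pathEdges π.1 ∪ pathEdges π.2, (fun ω : Config d => ω e) ⁻¹' {true} := by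
    ext ω
    simp [pathOpen_iff_forall_mem_pathEdges, or_imp, forall_and]
  rw [hset, hindep.measure_inter_preimage_eq_mul _ fun _ _ => measurableSet_singleton true]
  exact prod_congr rfl fun e _ => hmarg e

lemma natCast_Xcount_sq (ω : Config d) :
    (Xcount d n ω : ℝ≥0∞) ^ 2
      = ∑ π : PathPair d n, ({ω | pathOpen d ω π.1} ∩ {ω | pathOpen d ω π.2}).indicator 1 ω := by
  have hX : Xcount d n ω = #(univ.filter fun γ : Fin n → Fin d => pathOpen d ω γ) := by
    rw [Xcount, Nat.card_eq_fintype_card, Fintype.card_subtype]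
  rw [hX, ← Nat.cast_pow, sq, ← card_product, ← filter_product, ← univ_product_univ,
    natCast_card_filter]
  simp [Set.indicator_apply]

lemma lintegral_Xcount_sq (hindep : iIndepFun (fun e (ω : Config d) => ω e) P)
    (hmarg : ∀ e : (Fin d → ℤ) × Fin d, P {ω | ω e = true} = ENNReal.ofReal (p e.2))
    (hp : ∀ i, 0 < p i) (n : ℕ) :
    ∫⁻ ω, (Xcount d n ω : ℝ≥0∞) ^ 2 ∂P = ENNReal.ofReal (overlapSum p (fun i => (p i)⁻¹) n) := by
  have hmeas (π : PathPair d n) :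
      MeasurableSet ({ω | pathOpen d ω π.1} ∩ {ω | pathOpen d ω π.2}) :=
    (measurableSet_pathOpen π.1).inter (measurableSet_pathOpen π.2)
  simp_rw [natCast_Xcount_sq]
  rw [lintegral_finsetSum _ fun π _ => measurable_one.indicator (hmeas π), overlapSum,
    ENNReal.ofReal_sum_of_nonneg fun π _ =>
      overlapWeight_nonneg (fun i => (hp i).le) (fun i => (inv_pos.2 (hp i)).le) π]
  refine sum_congr rfl fun π _ => ?_
  rw [lintegral_indicator_one (hmeas π), measure_pathOpen_inter hindep hmarg,
    ← prod_pathEdges_union_eq_overlapWeight (fun i => (hp i).ne'),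
    ENNReal.ofReal_prod_of_nonneg fun e _ => (hp e.2).le]

lemma lintegral_W_sq {μ : ℝ} (hindep : iIndepFun (fun e (ω : Config d) => ω e) P)
    (hmarg : ∀ e : (Fin d → ℤ) × Fin d, P {ω | ω e = true} = ENNReal.ofReal (p e.2))
    (hp : ∀ i, 0 < p i) (hμ : 0 < μ) {W : ℕ → Config d → ℝ}
    (hW : ∀ n ω, W n ω = (Xcount d n ω : ℝ) / μ ^ n) (n : ℕ) :
    ∫⁻ ω, ENNReal.ofReal (W n ω ^ 2) ∂P
      = ENNReal.ofReal (overlapSum (fun i => p i / μ) (fun i => (p i)⁻¹) n) := by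
  have hμn : 0 < (μ ^ n) ^ 2 := by positivity
  have hpt (ω : Config d) :
      ENNReal.ofReal (W n ω ^ 2)
        = (ENNReal.ofReal ((μ ^ n) ^ 2))⁻¹ * (Xcount d n ω : ℝ≥0∞) ^ 2 := by
    rw [hW, div_pow, ENNReal.ofReal_div_of_pos hμn, ENNReal.ofReal_pow (Nat.cast_nonneg _),
      ENNReal.ofReal_natCast, ENNReal.div_eq_inv_mul]
  rw [lintegral_congr hpt,
    lintegral_const_mul' _ _ (ENNReal.inv_ne_top.2 (ENNReal.ofReal_pos.2 hμn).ne'),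
    lintegral_Xcount_sq hindep hmarg hp, ← ENNReal.div_eq_inv_mul,
    ← ENNReal.ofReal_div_of_pos hμn, overlapSum_div_const]

section Walks

variable {Ω : Type*} {ξ : Fin 2 × ℕ → Ω → (Fin d → ℤ)} {q : Fin d → ℝ} {n : ℕ}

def walkCylinder (ξ : Fin 2 × ℕ → Ω → (Fin d → ℤ)) (π : PathPair d n) : Set Ω :=
  ⋂ s : Fin 2 × Fin n, ξ (s.1, s.2) ⁻¹' {stdBasis d (![π.1, π.2] s.1 s.2)}

lemma mem_walkCylinder {π : PathPair d n} {ω : Ω} :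
    ω ∈ walkCylinder ξ π ↔ ∀ j : Fin n,
      ξ (0, j) ω = stdBasis d (π.1 j) ∧ ξ (1, j) ω = stdBasis d (π.2 j) := by
  simp [walkCylinder, Fin.forall_fin_two, forall_and]

lemma walkCylinder_subset_meetEvent {π : PathPair d n} (h : π.Meets n) :
    walkCylinder ξ π ⊆ meetEvent ξ n := by
  intro ω hω
  have hsum (a : Fin 2) (γ : Fin n → Fin d) (hγ : ∀ j : Fin n, ξ (a, j) ω = stdBasis d (γ j)) :
      walkSum ξ a n ω = pathPos d γ n := by
    rw [walkSum, pathPos_of_le γ le_rfl, ← Fin.sum_univ_eq_sum_range (fun t => ξ (a, t) ω)]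
    exact sum_congr rfl fun j _ => hγ j
  rw [mem_walkCylinder] at hω
  show walkSum ξ 0 n ω = walkSum ξ 1 n ω
  rw [hsum 0 π.1 fun j => (hω j).1, hsum 1 π.2 fun j => (hω j).2]
  exact h

lemma pairwiseDisjoint_walkCylinder :
    (Set.univ : Set (PathPair d n)).PairwiseDisjoint (walkCylinder ξ) := by
  intro π _ ρ _ hne
  refine Set.disjoint_left.2 fun ω hπ hρ => hne ?_
  rw [mem_walkCylinder] at hπ hρ
  exact Prod.ext (funext fun j => stdBasis_injective ((hπ j).1.symm.trans (hρ j).1))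
    (funext fun j => stdBasis_injective ((hπ j).2.symm.trans (hρ j).2))

variable [MeasurableSpace Ω] {Q : Measure Ω}

lemma measurableSet_walkCylinder (hmeas : ∀ a, Measurable (ξ a)) (π : PathPair d n) :
    MeasurableSet (walkCylinder ξ π) :=
  MeasurableSet.iInter fun _ => hmeas _ (measurableSet_singleton _)

lemma measure_walkCylinder (hindep : iIndepFun ξ Q)
    (hlaw : ∀ a i, Q {ω | ξ a ω = stdBasis d i} = ENNReal.ofReal (q i)) (hq : ∀ i, 0 ≤ q i)
    (π : PathPair d n) : Q (walkCylinder ξ π) = ENNReal.ofReal (pairWeight q π) := by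
  have hinj : Function.Injective fun s : Fin 2 × Fin n => (s.1, (s.2 : ℕ)) :=
    fun _ _ h => Prod.ext (Prod.ext_iff.1 h).1 (Fin.ext (Prod.ext_iff.1 h).2)
  have := (hindep.precomp hinj).measure_inter_preimage_eq_mul univ
    (sets := fun s => {stdBasis d (![π.1, π.2] s.1 s.2)}) fun _ _ => measurableSet_singleton _
  simp only [mem_univ, Set.iInter_true] at this
  rw [walkCylinder, this, pairWeight, ENNReal.ofReal_prod_of_nonneg fun j _ =>
    mul_nonneg (hq _) (hq _), Fintype.prod_prod_type, Fin.prod_univ_two, ← prod_mul_distrib]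
  refine prod_congr rfl fun j _ => ?_
  rw [ENNReal.ofReal_mul (hq _)]
  exact congrArg₂ (· * ·) (hlaw _ _) (hlaw _ _)

lemma ofReal_meetWeight_le (hmeas : ∀ a, Measurable (ξ a)) (hindep : iIndepFun ξ Q)
    (hlaw : ∀ a i, Q {ω | ξ a ω = stdBasis d i} = ENNReal.ofReal (q i)) (hq : ∀ i, 0 ≤ q i)
    (n : ℕ) : ENNReal.ofReal (meetWeight q n) ≤ Q (meetEvent ξ n) := by
  rw [meetWeight, ← sum_filter, ENNReal.ofReal_sum_of_nonneg fun π _ => pairWeight_nonneg hq π]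
  simp_rw [← measure_walkCylinder hindep hlaw hq]
  rw [← measure_biUnion_finset (pairwiseDisjoint_walkCylinder.subset (Set.subset_univ _))
    fun π _ => measurableSet_walkCylinder hmeas π]
  exact measure_mono (Set.iUnion₂_subset fun π hπ =>
    walkCylinder_subset_meetEvent (mem_filter.1 hπ).2)

lemma sum_range_meetWeight_le (hmeas : ∀ a, Measurable (ξ a)) (hindep : iIndepFun ξ Q)
    (hlaw : ∀ a i, Q {ω | ξ a ω = stdBasis d i} = ENNReal.ofReal (q i)) (hq : ∀ i, 0 ≤ q i)
    {L : ℝ} (hL0 : 0 ≤ L) (hL : ∑' n, Q (meetEvent ξ (n + 1)) ≤ ENNReal.ofReal L) (N : ℕ) :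
    ∑ n ∈ range N, meetWeight q n ≤ 1 + L := by
  cases N with
  | zero => simp; linarith
  | succ N =>
    rw [sum_range_succ', meetWeight_zero, add_comm]
    gcongr
    rw [← ENNReal.ofReal_le_ofReal_iff hL0,
      ENNReal.ofReal_sum_of_nonneg fun n _ => meetWeight_nonneg hq _]
    exact ((sum_le_sum fun n _ => ofReal_meetWeight_le hmeas hindep hlaw hq (n + 1)).trans
      (ENNReal.sum_le_tsum _)).trans hL

end Walks

theorem second_moment_bounded_of_lambda_le_general
    (d : ℕ)
    (p : Fin d → ℝ) (hp : ∀ i, p i ∈ Set.Ioo (0 : ℝ) 1)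
    (μ : ℝ) (hμ : μ = ∑ i, p i) (hμ1 : 1 < μ)
    -- the percolation model
    (P : Measure (Config d))
    (hindep : iIndepFun (fun e (ω : Config d) => ω e) P)
    (hmarg : ∀ e : (Fin d → ℤ) × Fin d, P {ω : Config d | ω e = true} = ENNReal.ofReal (p e.2))
    (W : ℕ → Config d → ℝ) (hW : ∀ n ω, W n ω = (Xcount d n ω : ℝ) / μ ^ n)
    -- two independent oriented random walks associated to q = (p₁/μ, …, p_d/μ)
    {Ω : Type*} [MeasurableSpace Ω] (Q : Measure Ω)
    (ξ : Fin 2 × ℕ → Ω → (Fin d → ℤ))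
    (hmeas : ∀ a, Measurable (ξ a))
    (hindepξ : iIndepFun ξ Q)
    (hlaw : ∀ a i, Q {ω | ξ a ω = stdBasis d i} = ENNReal.ofReal (p i / μ))
    -- λ(q) ≤ μ - 1
    (hlam : (∑' n : ℕ, Q (meetEvent ξ (n + 1))) ≤ ENNReal.ofReal (μ - 1)) :
    (⨆ n : ℕ, ∫⁻ ω, ENNReal.ofReal ((W n ω) ^ 2) ∂P) < ⊤ := by
  have hp0 (i : Fin d) : 0 < p i := (hp i).1
  have hμ0 : 0 < μ := by linarith
  set q : Fin d → ℝ := fun i => p i / μ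
  have hq0 (i : Fin d) : 0 ≤ q i := (div_pos (hp0 i) hμ0).le
  have hq : ∑ i, q i = 1 := by rw [← sum_div, ← hμ, div_self hμ0.ne']
  have hqr : (∑ i, q i ^ 2 * (p i)⁻¹) * μ = 1 := by
    have (i : Fin d) : q i ^ 2 * (p i)⁻¹ = p i / μ ^ 2 := by
      simp only [q]
      field_simp [(hp0 i).ne']
    rw [sum_congr rfl fun i _ => this i, ← sum_div, ← hμ]
    field_simp
  have hG (N : ℕ) : ∑ n ∈ range N, meetWeight q n ≤ μ := by
    simpa using sum_range_meetWeight_le hmeas hindepξ hlaw hq0 (by linarith) hlam N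
  refine lt_of_le_of_lt (iSup_le fun n => ?_) (ENNReal.ofReal_lt_top (r := (∑ i, q i ^ 2)⁻¹))
  rw [lintegral_W_sq hindep hmarg hp0 hμ0 hW]
  exact ENNReal.ofReal_le_ofReal
    (overlapSum_le_inv hq0 hq (fun i => (inv_pos.2 (hp0 i)).le) hG hqr.le n)

theorem second_moment_bounded_of_lambda_le
    (d : ℕ) (hd : 1 ≤ d)
    (p : Fin d → ℝ) (hp : ∀ i, p i ∈ Set.Ioo (0 : ℝ) 1)
    (μ : ℝ) (hμ : μ = ∑ i, p i) (hμ1 : 1 < μ)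
    -- the percolation model
    (P : Measure (Config d)) [IsProbabilityMeasure P]
    (hindep : iIndepFun (fun e (ω : Config d) => ω e) P)
    (hmarg : ∀ e : (Fin d → ℤ) × Fin d, P {ω : Config d | ω e = true} = ENNReal.ofReal (p e.2))
    (W : ℕ → Config d → ℝ) (hW : ∀ n ω, W n ω = (Xcount d n ω : ℝ) / μ ^ n)
    -- two independent oriented random walks associated to q = (p₁/μ, …, p_d/μ)
    {Ω : Type*} [MeasurableSpace Ω] (Q : Measure Ω) [IsProbabilityMeasure Q]
    (ξ : Fin 2 × ℕ → Ω → (Fin d → ℤ))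
    (hmeas : ∀ a, Measurable (ξ a))
    (hindepξ : iIndepFun ξ Q)
    (hlaw : ∀ a i, Q {ω | ξ a ω = stdBasis d i} = ENNReal.ofReal (p i / μ))
    -- λ(q) ≤ μ - 1
    (hlam : (∑' n : ℕ, Q (meetEvent ξ (n + 1))) ≤ ENNReal.ofReal (μ - 1)) :
    (⨆ n : ℕ, ∫⁻ ω, ENNReal.ofReal ((W n ω) ^ 2) ∂P) < ⊤ :=
  second_moment_bounded_of_lambda_le_general d p hp μ hμ hμ1 P hindep hmarg W hW Q ξ hmeas hindepξ
    hlaw hlam
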